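/- For every matrix D ∈ USD₂ ∩ SIM₂ it holds that W(D) = −D₁,₁ − D₁,₂ + D₃,₂ + D₃,₃ ≥ 0. -/

import Mathlib

open Matrix
open scoped ComplexOrder

/-- A qubit state: a positive semidefinite 2×2 complex matrix with trace 1. -/
def QubitState (ρ : Matrix (Fin 2) (Fin 2) ℂ) : Prop :=
  ρ.PosSemidef ∧ ρ.trace = 1

/-- A qubit effect: a 2×2 complex matrix `E` with both `E` and `1 - E` positive semidefinite. -/
def QubitEffect (E : Matrix (Fin 2) (Fin 2) ℂ) : Prop :=
  E.PosSemidef ∧ (1 - E).PosSemidef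

/-- A realization of a 3×3 correlation matrix `P` by three qubit states, a three-outcome
qubit POVM `(M11, M21, M31)` and a two-outcome qubit POVM `(M12, M22)`. -/
def IsRealization (P : Matrix (Fin 3) (Fin 3) ℝ)
    (ρ : Fin 3 → Matrix (Fin 2) (Fin 2) ℂ)
    (M11 M21 M31 M12 M22 : Matrix (Fin 2) (Fin 2) ℂ) : Prop :=
  (∀ x, QubitState (ρ x)) ∧
  QubitEffect M11 ∧ QubitEffect M21 ∧ QubitEffect M31 ∧
  M11 + M21 + M31 = 1 ∧
  QubitEffect M12 ∧ QubitEffect M22 ∧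
  M12 + M22 = 1 ∧
  (∀ x, P x 0 = ((ρ x * M11).trace).re ∧
        P x 1 = ((ρ x * M21).trace).re ∧
        P x 2 = ((ρ x * M12).trace).re)

/-- The USD pattern of zeros and ones of the correlation matrix, Eq. (3). -/
def USDpattern (P : Matrix (Fin 3) (Fin 3) ℝ) : Prop :=
  P 0 2 = 0 ∧ P 1 1 = 0 ∧ P 1 2 = 1 ∧ P 2 0 = 0

/-- The set USD₂ of qubit USD correlations. -/
def USD2 (P : Matrix (Fin 3) (Fin 3) ℝ) : Prop :=
  USDpattern P ∧
  ∃ ρ M11 M21 M31 M12 M22, IsRealization P ρ M11 M21 M31 M12 M22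

/-- A three-outcome qubit POVM is simulable by dichotomic measurements, Eq. (1). -/
def Simulable (M11 M21 M31 : Matrix (Fin 2) (Fin 2) ℂ) : Prop :=
  ∃ p1 p2 p3 : ℝ, ∃ N11 N22 N13 : Matrix (Fin 2) (Fin 2) ℂ,
    0 ≤ p1 ∧ 0 ≤ p2 ∧ 0 ≤ p3 ∧ p1 + p2 + p3 = 1 ∧
    QubitEffect N11 ∧ QubitEffect N22 ∧ QubitEffect N13 ∧
    M11 = p1 • N11 + p3 • N13 ∧
    M21 = p1 • (1 - N11) + p2 • N22 ∧
    M31 = p2 • (1 - N22) + p3 • (1 - N13)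

/-- The set SIM₂ of simulable trichotomic qubit correlations in the minimal scenario. -/
def SIM2 (P : Matrix (Fin 3) (Fin 3) ℝ) : Prop :=
  ∃ ρ M11 M21 M31 M12 M22, IsRealization P ρ M11 M21 M31 M12 M22 ∧
    Simulable M11 M21 M31

/-- The parameterized USD correlation matrix 𝒫(p, q, ξ) of Eq. (4). -/
noncomputable def Pmat (p q ξ : ℝ) : Matrix (Fin 3) (Fin 3) ℝ :=
  !![p * ξ,       q,           0;
     p * (1 - ξ), 0,           1;
     0,           q * (1 - ξ), ξ]

/-!
Indices are Lean's, starting at 0. A vanishing probability `tr(ρE) = 0` between positive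
semidefinite matrices forces `ρE = 0`. The USD pattern therefore makes `ρ 0` and `ρ 1`
orthogonal pure qubit states with `ρ 0 + ρ 1 = 1`, `M₁|₂ = ρ 1` and `M₂|₁ = m • ρ 0`, so that
`W(D) = t (1 - m) - tr(ρ 0 M₁|₁)` with `t = tr(ρ 2 ρ 1)` and `m = tr(ρ 0 M₂|₁)`.
If the simulation uses `N₁|₁` (`p₁ > 0`), this effect discriminates `ρ 1` from `ρ 2` perfectly,
so `ρ 2 = ρ 0` and both terms vanish. Otherwise `M₁|₁ = p₃ N₁|₃` is annihilated by `ρ 2`,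
which for qubits gives `N₁|₃ ≤ 1 - ρ 2`, hence `tr(ρ 0 M₁|₁) ≤ p₃ t`, while `m ≤ p₂ = 1 - p₃`.
-/

namespace Matrix

variable {n : Type*} [Fintype n]

lemma IsHermitian.mul_eq_zero_comm {α : Type*} [Semiring α] [StarRing α] {A B : Matrix n n α}
    (hA : A.IsHermitian) (hB : B.IsHermitian) : A * B = 0 ↔ B * A = 0 := by
  constructor <;> intro h <;> simpa [conjTranspose_mul, hA.eq, hB.eq] using congrArg (·ᴴ) h

lemma mul_eq_zero_of_mul_eq_zero_of_mul_one_sub_eq_zero {α : Type*} [Ring α] [StarRing α]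
    [DecidableEq n] {σ ρ E : Matrix n n α} (hρ : ρ.IsHermitian) (hE : E.IsHermitian)
    (hσE : σ * E = 0) (hρE : ρ * (1 - E) = 0) : σ * ρ = 0 := by
  have hEρ : (1 - E) * ρ = 0 := (hρ.mul_eq_zero_comm (isHermitian_one.sub hE)).1 hρE
  rw [sub_mul, one_mul, sub_eq_zero] at hEρ
  rw [hEρ, ← mul_assoc, hσE, zero_mul]

lemma det_eq_zero_of_mul_eq_zero {K : Type*} [DecidableEq n] [Field K] {A B : Matrix n n K}
    (h : A * B = 0) (hB : B ≠ 0) : A.det = 0 := by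
  by_contra hA
  exact hB (((isUnit_iff_isUnit_det A).2 (Ne.isUnit hA)).mul_right_eq_zero.1 h)

section RCLike

variable {𝕜 : Type*} [RCLike 𝕜]

lemma PosSemidef.exists_eq_conjTranspose_mul_self [DecidableEq n] {A : Matrix n n 𝕜}
    (hA : A.PosSemidef) : ∃ X : Matrix n n 𝕜, A = Xᴴ * X := by
  open scoped MatrixOrder in
  exact ⟨CFC.sqrt A, by
    rw [← star_eq_conjTranspose, (CFC.sqrt_nonneg A).isSelfAdjoint.star_eq,
      CFC.sqrt_mul_sqrt_self A hA.nonneg]⟩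

lemma trace_conjTranspose_mul_self_mul_conjTranspose_mul_self (X Y : Matrix n n 𝕜) :
    (Xᴴ * X * (Yᴴ * Y)).trace = ((X * Yᴴ)ᴴ * (X * Yᴴ)).trace := by
  rw [conjTranspose_mul, conjTranspose_conjTranspose, ← mul_assoc, trace_mul_comm]
  simp only [mul_assoc]

variable [DecidableEq n] {A B : Matrix n n 𝕜}

lemma PosSemidef.trace_mul_nonneg (hA : A.PosSemidef) (hB : B.PosSemidef) :
    0 ≤ (A * B).trace := by
  obtain ⟨X, rfl⟩ := hA.exists_eq_conjTranspose_mul_self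
  obtain ⟨Y, rfl⟩ := hB.exists_eq_conjTranspose_mul_self
  rw [trace_conjTranspose_mul_self_mul_conjTranspose_mul_self]
  exact (posSemidef_conjTranspose_mul_self _).trace_nonneg

lemma PosSemidef.mul_eq_zero_of_trace_mul_eq_zero (hA : A.PosSemidef) (hB : B.PosSemidef)
    (h : (A * B).trace = 0) : A * B = 0 := by
  obtain ⟨X, rfl⟩ := hA.exists_eq_conjTranspose_mul_self
  obtain ⟨Y, rfl⟩ := hB.exists_eq_conjTranspose_mul_self
  rw [trace_conjTranspose_mul_self_mul_conjTranspose_mul_self,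
    trace_conjTranspose_mul_self_eq_zero_iff] at h
  calc Xᴴ * X * (Yᴴ * Y) = Xᴴ * (X * Yᴴ) * Y := by simp only [mul_assoc]
    _ = 0 := by rw [h, mul_zero, zero_mul]

end RCLike

variable [DecidableEq n]

lemma re_trace_mul_smul_add_smul (ρ X Y : Matrix n n ℂ) (p q : ℝ) :
    (ρ * (p • X + q • Y)).trace.re = p * (ρ * X).trace.re + q * (ρ * Y).trace.re := by
  simp [mul_add, trace_add, trace_smul]

lemma re_trace_mul_one_sub (ρ E : Matrix n n ℂ) :
    (ρ * (1 - E)).trace.re = ρ.trace.re - (ρ * E).trace.re := by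
  simp [mul_sub, trace_sub]

namespace PosSemidef

variable {ρ E X Y : Matrix n n ℂ}

lemma ofReal_re_trace_mul (hρ : ρ.PosSemidef) (hX : X.PosSemidef) :
    ((ρ * X).trace.re : ℂ) = (ρ * X).trace :=
  (Complex.eq_re_of_ofReal_le (hρ.trace_mul_nonneg hX)).symm

lemma re_trace_mul_nonneg (hρ : ρ.PosSemidef) (hX : X.PosSemidef) : 0 ≤ (ρ * X).trace.re :=
  (Complex.nonneg_iff.mp (hρ.trace_mul_nonneg hX)).1

lemma mul_eq_zero_of_re_trace_mul_eq_zero (hρ : ρ.PosSemidef) (hX : X.PosSemidef)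
    (h : (ρ * X).trace.re = 0) : ρ * X = 0 :=
  hρ.mul_eq_zero_of_trace_mul_eq_zero hX <| by
    rw [← hρ.ofReal_re_trace_mul hX, h, Complex.ofReal_zero]

lemma re_trace_mul_le_one (hρ : ρ.PosSemidef) (htr : ρ.trace = 1) (hE : (1 - E).PosSemidef) :
    (ρ * E).trace.re ≤ 1 := by
  have := hρ.re_trace_mul_nonneg hE
  rw [re_trace_mul_one_sub, htr, Complex.one_re] at this
  linarith

lemma mul_eq_zero_of_re_trace_mul_smul_add_smul_eq_zero (hρ : ρ.PosSemidef)
    (hX : X.PosSemidef) (hY : Y.PosSemidef) {p q : ℝ} (hp : 0 < p) (hq : 0 ≤ q)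
    (h : (ρ * (p • X + q • Y)).trace.re = 0) : ρ * X = 0 := by
  rw [re_trace_mul_smul_add_smul, add_eq_zero_iff_of_nonneg
    (mul_nonneg hp.le (hρ.re_trace_mul_nonneg hX)) (mul_nonneg hq (hρ.re_trace_mul_nonneg hY))] at h
  exact hρ.mul_eq_zero_of_re_trace_mul_eq_zero hX ((mul_eq_zero.1 h.1).resolve_left hp.ne')

end PosSemidef

section FinTwo

variable {R : Type*} [CommRing R]

lemma mul_self_eq_trace_smul_sub_det_smul (A : Matrix (Fin 2) (Fin 2) R) :
    A * A = A.trace • A - A.det • 1 := by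
  ext i j
  fin_cases i <;> fin_cases j <;> simp [mul_apply, trace_fin_two, det_fin_two] <;> ring

lemma mul_mul_self_eq_trace_mul_smul_of_det_eq_zero {q : Matrix (Fin 2) (Fin 2) R}
    (hq : q.det = 0) (X : Matrix (Fin 2) (Fin 2) R) : q * X * q = (q * X).trace • q := by
  rw [det_fin_two] at hq
  ext i j
  fin_cases i <;> fin_cases j <;> simp [mul_apply, trace_fin_two]
  · linear_combination -X 1 1 * hq
  · linear_combination X 0 1 * hq
  · linear_combination X 1 0 * hq
  · linear_combination -X 0 0 * hq

end FinTwo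

end Matrix

namespace QubitState

variable {ρ σ τ X : Matrix (Fin 2) (Fin 2) ℂ}

lemma ne_zero (hρ : QubitState ρ) : ρ ≠ 0 := by
  rintro rfl
  simpa using hρ.2

lemma mul_self_eq_self_of_det_eq_zero (hρ : QubitState ρ) (hdet : ρ.det = 0) : ρ * ρ = ρ := by
  rw [mul_self_eq_trace_smul_sub_det_smul, hρ.2, hdet, one_smul, zero_smul, sub_zero]

lemma posSemidef_one_sub (hρ : QubitState ρ) : (1 - ρ).PosSemidef := by
  -- `1 - ρ` is the adjugate of `ρ`, which is `ρᵀ` conjugated by a rotation.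
  have h : 1 - ρ = !![0, 1; -1, 0]ᴴ * ρᵀ * !![0, 1; -1, 0] := by
    have := hρ.2
    rw [trace_fin_two] at this
    ext i j
    fin_cases i <;> fin_cases j <;> simp [mul_apply] <;> linear_combination -this
  rw [h]
  exact hρ.1.transpose.conjTranspose_mul_mul_same _

lemma add_eq_one_of_mul_eq_zero (hρ : QubitState ρ) (hσ : QubitState σ) (h : ρ * σ = 0) :
    ρ + σ = 1 := by
  have h' : σ * ρ = 0 := (hρ.1.isHermitian.mul_eq_zero_comm hσ.1.isHermitian).1 h
  have hρρ := hρ.mul_self_eq_self_of_det_eq_zero (det_eq_zero_of_mul_eq_zero h hσ.ne_zero)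
  have hσσ := hσ.mul_self_eq_self_of_det_eq_zero (det_eq_zero_of_mul_eq_zero h' hρ.ne_zero)
  set P := ρ + σ
  have hP : P * P = P := by simp only [P, add_mul, mul_add, hρρ, hσσ, h, h', add_zero, zero_add]
  have htr : P.trace = 2 := by simp only [P, trace_add, hρ.2, hσ.2]; norm_num
  have hPdet : P.det • 1 = P := by
    have := mul_self_eq_trace_smul_sub_det_smul P
    rw [hP, htr, two_smul, eq_sub_iff_add_eq] at this
    exact add_left_cancel this
  have hdet : P.det = 1 := by
    have := congrArg trace hPdet
    rw [trace_smul, trace_one, htr] at this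
    simpa using this
  rw [← hPdet, hdet, one_smul]

lemma eq_of_mul_eq_zero (hρ : QubitState ρ) (hσ : QubitState σ) (hτ : QubitState τ)
    (hσρ : σ * ρ = 0) (hτρ : τ * ρ = 0) : σ = τ :=
  add_right_cancel ((hσ.add_eq_one_of_mul_eq_zero hρ hσρ).trans
    (hτ.add_eq_one_of_mul_eq_zero hρ hτρ).symm)

lemma re_trace_mul_eq_one_sub (hρ : QubitState ρ) (hσ : QubitState σ) (h : ρ * σ = 0)
    (hτ : τ.trace = 1) : (τ * ρ).trace.re = 1 - (τ * σ).trace.re := by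
  rw [eq_sub_of_add_eq (hρ.add_eq_one_of_mul_eq_zero hσ h), re_trace_mul_one_sub, hτ,
    Complex.one_re]

lemma eq_trace_mul_smul_of_mul_eq_zero (hρ : QubitState ρ) (hσ : QubitState σ) (h : ρ * σ = 0)
    (hX : X.IsHermitian) (hσX : σ * X = 0) : X = (ρ * X).trace • ρ := by
  have hXσ : X * σ = 0 := (hσ.1.isHermitian.mul_eq_zero_comm hX).1 hσX
  calc X = (ρ + σ) * X * (ρ + σ) := by
        rw [hρ.add_eq_one_of_mul_eq_zero hσ h, one_mul, mul_one]
    _ = ρ * X * ρ := by simp only [add_mul, mul_add, hσX, hXσ, mul_zero, add_zero, mul_assoc]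
    _ = (ρ * X).trace • ρ :=
        mul_mul_self_eq_trace_mul_smul_of_det_eq_zero (det_eq_zero_of_mul_eq_zero h hσ.ne_zero) X

lemma posSemidef_one_sub_sub_of_mul_eq_zero {N : Matrix (Fin 2) (Fin 2) ℂ} (hτ : QubitState τ)
    (hN : QubitEffect N) (h : τ * N = 0) : (1 - τ - N).PosSemidef := by
  by_cases hdet : τ.det = 0
  · have hτ' : QubitState (1 - τ) :=
      ⟨hτ.posSemidef_one_sub, by rw [trace_sub, trace_one, hτ.2]; norm_num⟩
    have horth : (1 - τ) * τ = 0 := by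
      rw [sub_mul, one_mul, hτ.mul_self_eq_self_of_det_eq_zero hdet, sub_self]
    have hNτ := hτ'.eq_trace_mul_smul_of_mul_eq_zero hτ horth hN.1.isHermitian h
    have hsmul : 1 - τ - N = ((1 - τ) * (1 - N)).trace • (1 - τ) := by
      rw [mul_sub, mul_one, trace_sub, hτ'.2, sub_smul, one_smul, ← hNτ]
    rw [hsmul]
    exact hτ'.1.smul (hτ'.1.trace_mul_nonneg hN.2)
  · have hN0 : N = 0 := by
      by_contra hN0
      exact hdet (det_eq_zero_of_mul_eq_zero h hN0)
    simpa [hN0] using hτ.posSemidef_one_sub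

lemma re_trace_mul_le_of_mul_eq_zero {N : Matrix (Fin 2) (Fin 2) ℂ} (hρ : QubitState ρ)
    (hσ : QubitState σ) (h : ρ * σ = 0) (hτ : QubitState τ) (hN : QubitEffect N)
    (hτN : τ * N = 0) : (ρ * N).trace.re ≤ (τ * σ).trace.re := by
  have := hρ.1.re_trace_mul_nonneg (hτ.posSemidef_one_sub_sub_of_mul_eq_zero hN hτN)
  rw [mul_sub, trace_sub, Complex.sub_re, re_trace_mul_one_sub, hρ.2, Complex.one_re,
    trace_mul_comm ρ τ, hρ.re_trace_mul_eq_one_sub hσ h hτ.2] at this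
  linarith

end QubitState

lemma QubitEffect.mul_eq_zero_and_eq_of_re_trace_mul {ρ σ F : Matrix (Fin 2) (Fin 2) ℂ}
    (hF : QubitEffect F) (hρ : QubitState ρ) (hσ : QubitState σ)
    (hρF : (ρ * F).trace.re = 0) (hσF : (σ * F).trace.re = 1) : ρ * σ = 0 ∧ F = σ := by
  have hρF' : ρ * F = 0 := hρ.1.mul_eq_zero_of_re_trace_mul_eq_zero hF.1 hρF
  have hσF' : σ * (1 - F) = 0 := hσ.1.mul_eq_zero_of_re_trace_mul_eq_zero hF.2 (by
    rw [re_trace_mul_one_sub, hσ.2, hσF, Complex.one_re, sub_self])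
  have hρσ : ρ * σ = 0 :=
    mul_eq_zero_of_mul_eq_zero_of_mul_one_sub_eq_zero hσ.1.isHermitian hF.1.isHermitian hρF' hσF'
  refine ⟨hρσ, ?_⟩
  rw [mul_sub, mul_one, sub_eq_zero] at hσF'
  calc F = (ρ + σ) * F := by rw [hρ.add_eq_one_of_mul_eq_zero hσ hρσ, one_mul]
    _ = σ := by rw [add_mul, hρF', ← hσF', zero_add]

lemma Simulable.re_trace_mul_le {ρ₀ ρ₁ ρ₂ A B C : Matrix (Fin 2) (Fin 2) ℂ}
    (hsim : Simulable A B C) (hρ₀ : QubitState ρ₀) (hρ₁ : QubitState ρ₁) (hρ₂ : QubitState ρ₂)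
    (hρ₀₁ : ρ₀ * ρ₁ = 0) (hB : (ρ₁ * B).trace.re = 0) (hA : (ρ₂ * A).trace.re = 0) :
    (ρ₀ * A).trace.re ≤ (ρ₂ * ρ₁).trace.re * (1 - (ρ₀ * B).trace.re) := by
  obtain ⟨p₁, p₂, p₃, N₁, N₂, N₃, hp₁, hp₂, hp₃, hp, hN₁, hN₂, hN₃, rfl, rfl, -⟩ := hsim
  rcases hp₁.eq_or_lt with rfl | hp₁
  · have hm : (ρ₀ * ((0 : ℝ) • (1 - N₁) + p₂ • N₂)).trace.re ≤ p₂ := by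
      rw [re_trace_mul_smul_add_smul]
      nlinarith [hρ₀.1.re_trace_mul_le_one hρ₀.2 hN₂.2]
    have ha : (ρ₀ * ((0 : ℝ) • N₁ + p₃ • N₃)).trace.re ≤ p₃ * (ρ₂ * ρ₁).trace.re := by
      rw [re_trace_mul_smul_add_smul, zero_mul, zero_add]
      rcases hp₃.eq_or_lt with rfl | hp₃
      · simp
      rw [add_comm] at hA
      have hρ₂N₃ :=
        hρ₂.1.mul_eq_zero_of_re_trace_mul_smul_add_smul_eq_zero hN₃.1 hN₁.1 hp₃ le_rfl hA
      exact mul_le_mul_of_nonneg_left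
        (hρ₀.re_trace_mul_le_of_mul_eq_zero hρ₁ hρ₀₁ hρ₂ hN₃ hρ₂N₃) hp₃.le
    nlinarith [hρ₂.1.re_trace_mul_nonneg hρ₁.1]
  · have hρ₁N₁ := hρ₁.1.mul_eq_zero_of_re_trace_mul_smul_add_smul_eq_zero hN₁.2 hN₂.1 hp₁ hp₂ hB
    have hρ₂N₁ := hρ₂.1.mul_eq_zero_of_re_trace_mul_smul_add_smul_eq_zero hN₁.1 hN₃.1 hp₁ hp₃ hA
    have hρ₂₁ := mul_eq_zero_of_mul_eq_zero_of_mul_one_sub_eq_zero hρ₁.1.isHermitian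
      hN₁.1.isHermitian hρ₂N₁ hρ₁N₁
    obtain rfl := hρ₁.eq_of_mul_eq_zero hρ₂ hρ₀ hρ₂₁ hρ₀₁
    rw [hA, hρ₂₁]
    simp

/-- For every `D ∈ USD₂ ∩ SIM₂` the witness value `W(D) = -D₁₁ - D₁₂ + D₃₂ + D₃₃`
is nonnegative. -/
theorem witness_nonneg_on_usd2_inter_sim2 (D : Matrix (Fin 3) (Fin 3) ℝ)
    (hU : USD2 D) (hS : SIM2 D) :
    -D 0 0 - D 0 1 + D 2 1 + D 2 2 ≥ 0 := by
  obtain ⟨⟨h02, h11, h12, h20⟩, -⟩ := hU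
  obtain ⟨ρ, A, B, _, F, _, ⟨hρ, -, hB, -, -, hF, -, -, hP⟩, hsim⟩ := hS
  simp only [(hP _).1, (hP _).2.1, (hP _).2.2] at h02 h11 h12 h20 ⊢
  obtain ⟨hρ₀₁, rfl⟩ := hF.mul_eq_zero_and_eq_of_re_trace_mul (hρ 0) (hρ 1) h02 h12
  have hBρ : B = (ρ 0 * B).trace • ρ 0 := (hρ 0).eq_trace_mul_smul_of_mul_eq_zero (hρ 1) hρ₀₁
    hB.1.isHermitian ((hρ 1).1.mul_eq_zero_of_re_trace_mul_eq_zero hB.1 h11)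
  have h21 : (ρ 2 * B).trace.re = (ρ 0 * B).trace.re * (1 - (ρ 2 * ρ 1).trace.re) := by
    conv_lhs => rw [hBρ, ← (hρ 0).1.ofReal_re_trace_mul hB.1, mul_smul_comm, trace_smul,
      smul_eq_mul, Complex.re_ofReal_mul, (hρ 0).re_trace_mul_eq_one_sub (hρ 1) hρ₀₁ (hρ 2).2]
  have := hsim.re_trace_mul_le (hρ 0) (hρ 1) (hρ 2) hρ₀₁ h11 h20
  linarith
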